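/- arXiv:1704.01156 — 4 statements merged into one kernel-verified Lean document; each statement's English description precedes it below -/
import Mathlib

section
/- In the CFLS coloring φ₁, there do not exist five distinct vertices a, b, c, d, e with φ₁(ab) = φ₁(bc) = φ₁(de) and φ₁(cd) = φ₁(ae). -/
/-- The first index at which two tuples differ, if any. -/
def firstDiff {β : ℕ} {α : Type*} [DecidableEq α] (u v : Fin β → α) : Option (Fin β) :=
  if h : (Finset.univ.filter fun k => u k ≠ v k).Nonempty then
    some ((Finset.univ.filter fun k => u k ≠ v k).min' h)
  else none

/-- The CFLS coloring: a vertex is an element of `{0,1}^{β²}`, viewed as `β` blocks of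
length `β` (so `x i : Fin β → Bool` is the `i`-th block).  The color of the edge `xy` is
`((i, {x⁽ⁱ⁾, y⁽ⁱ⁾}), i₁, …, i_β)` where `i` is the first block at which `x, y` differ
(`none` if they agree everywhere) and `i_k` is the first bit at which blocks `x⁽ᵏ⁾, y⁽ᵏ⁾`
differ (`none` if they agree). -/
def phi1 {β : ℕ} (x y : Fin β → Fin β → Bool) :
    Option (Fin β × Finset (Fin β → Bool)) × (Fin β → Option (Fin β)) :=
  ((firstDiff x y).map fun i => (i, ({x i, y i} : Finset (Fin β → Bool))),
   fun k => firstDiff (x k) (y k))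

lemma firstDiff_eq_none_iff {β : ℕ} {α : Type*} [DecidableEq α] (u v : Fin β → α) :
    firstDiff u v = none ↔ u = v := by
  unfold firstDiff
  split
  · rename_i h
    simp only [reduceCtorEq, false_iff]
    intro huv
    obtain ⟨k, hk⟩ := h
    simp [huv] at hk
  · rename_i h
    simp only [true_iff]
    funext k
    by_contra hk
    exact h ⟨k, by simp [hk]⟩

lemma firstDiff_some_ne {β : ℕ} {α : Type*} [DecidableEq α] {u v : Fin β → α} {i : Fin β}
    (h : firstDiff u v = some i) : u i ≠ v i := by
  unfold firstDiff at h
  split at h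
  · rename_i hne
    have := Finset.min'_mem _ hne
    rw [Option.some_inj] at h
    rw [h] at this
    simpa using this
  · exact absurd h (by simp)

lemma firstDiff_some_of_ne {β : ℕ} {α : Type*} [DecidableEq α] {u v : Fin β → α}
    (h : u ≠ v) : ∃ i, firstDiff u v = some i := by
  cases hf : firstDiff u v with
  | none => exact absurd ((firstDiff_eq_none_iff u v).mp hf) h
  | some i => exact ⟨i, rfl⟩

/-- The CFLS coloring forbids five distinct vertices `a,b,c,d,e` with
`φ₁(ab) = φ₁(bc) = φ₁(de)` and `φ₁(cd) = φ₁(ae)`. -/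
theorem stmt_15 {β : ℕ} (a b c d e : Fin β → Fin β → Bool)
    (hdist : Function.Injective ![a, b, c, d, e])
    (h1 : phi1 a b = phi1 b c) (h2 : phi1 b c = phi1 d e)
    (h3 : phi1 c d = phi1 a e) : False := by
  -- a ≠ b
  have hab : a ≠ b := by
    intro h
    have := hdist (a₁ := 0) (a₂ := 1) (by simpa using h)
    simp at this
  obtain ⟨i, hi⟩ := firstDiff_some_of_ne hab
  have h1f : firstDiff b c = some i ∧ ({a i, b i} : Finset (Fin β → Bool)) = {b i, c i} := by
    have := congrArg Prod.fst h1
    simp only [phi1, hi] at this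
    cases hbc : firstDiff b c with
    | none => rw [hbc] at this; simp at this
    | some j =>
      rw [hbc] at this
      simp only [Option.map_some, Option.some_inj, Prod.mk.injEq] at this
      obtain ⟨hij, hset⟩ := this
      subst hij
      exact ⟨rfl, hset⟩
  have h2f : firstDiff d e = some i ∧ ({b i, c i} : Finset (Fin β → Bool)) = {d i, e i} := by
    have := congrArg Prod.fst h2
    simp only [phi1, h1f.1] at this
    cases hde : firstDiff d e with
    | none => rw [hde] at this; simp at this
    | some j =>
      rw [hde] at this
      simp only [Option.map_some, Option.some_inj, Prod.mk.injEq] at this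
      obtain ⟨hij, hset⟩ := this
      subst hij
      exact ⟨rfl, hset⟩
  have hab' : a i ≠ b i := firstDiff_some_ne hi
  have hbc' : b i ≠ c i := firstDiff_some_ne h1f.1
  have hde' : d i ≠ e i := firstDiff_some_ne h2f.1
  -- c i = a i
  have hca : c i = a i := by
    have : a i ∈ ({b i, c i} : Finset (Fin β → Bool)) := by
      rw [← h1f.2]; simp
    simp only [Finset.mem_insert, Finset.mem_singleton] at this
    rcases this with h | h
    · exact absurd h hab'
    · exact h.symm
  -- {d i, e i} = {a i, b i}
  have hset : ({d i, e i} : Finset (Fin β → Bool)) = {a i, b i} := by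
    rw [← h2f.2, ← h1f.2]
  have hd : d i = a i ∨ d i = b i := by
    have : d i ∈ ({a i, b i} : Finset (Fin β → Bool)) := by rw [← hset]; simp
    simpa using this
  have he : e i = a i ∨ e i = b i := by
    have : e i ∈ ({a i, b i} : Finset (Fin β → Bool)) := by rw [← hset]; simp
    simpa using this
  -- second components of h3 at i
  have h3i : firstDiff (c i) (d i) = firstDiff (a i) (e i) := by
    have := congrArg Prod.snd h3
    exact congrFun this i
  rcases hd with hd | hd
  · -- d i = a i, so c i = d i, e i must be b i
    have hce : c i = d i := by rw [hca, hd]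
    have heb : e i = b i := by
      rcases he with he | he
      · exact absurd (by rw [hd, he]) hde'
      · exact he
    rw [(firstDiff_eq_none_iff _ _).mpr hce] at h3i
    have hae : a i ≠ e i := by rw [heb]; exact hab'
    obtain ⟨j, hj⟩ := firstDiff_some_of_ne hae
    rw [hj] at h3i
    exact absurd h3i (by simp)
  · -- d i = b i, so e i = a i, c i ≠ d i but a i = e i
    have hea : e i = a i := by
      rcases he with he | he
      · exact he
      · exact absurd (by rw [hd, he]) hde'
    have hcd : c i ≠ d i := by rw [hca, hd]; exact hab'
    rw [(firstDiff_eq_none_iff _ _).mpr hea.symm] at h3i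
    obtain ⟨j, hj⟩ := firstDiff_some_of_ne hcd
    rw [hj] at h3i
    exact absurd h3i (by simp)
end

section
/- Under the product coloring φ = φ₁ × φ₂ (CFLS with the order modification), there do not exist four distinct vertices a, b, c, d with φ(ab) = φ(cd), φ(ac) = φ(bd), and φ(ad) = φ(bc) (no 'striped' K₄). -/
/-- Order on binary strings (as binary integers): `u < v` iff at the first differing bit,
`u` has `0` and `v` has `1`. -/
def blockLt {β : ℕ} (u v : Fin β → Bool) : Prop :=
  ∃ j : Fin β, u j = false ∧ v j = true ∧ ∀ k, k < j → u k = v k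

/-- Order on vertices (binary strings of length β², as binary integers), via blocks:
`x < y` iff at the first differing block `i`, `x⁽ⁱ⁾ < y⁽ⁱ⁾`. -/
def strLt {β : ℕ} (x y : Fin β → Fin β → Bool) : Prop :=
  ∃ i : Fin β, blockLt (x i) (y i) ∧ ∀ k, k < i → x k = y k

instance {β : ℕ} (u v : Fin β → Bool) : Decidable (blockLt u v) := by
  unfold blockLt; infer_instance

instance {β : ℕ} (x y : Fin β → Fin β → Bool) : Decidable (strLt x y) := by
  unfold strLt; infer_instance

/-- The second ("order") coordinate of the modified CFLS coloring, for the orientation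
from the smaller to the larger endpoint: `δ_i = -1` if `x⁽ⁱ⁾ > y⁽ⁱ⁾`, else `+1`. -/
def phi2 {β : ℕ} (x y : Fin β → Fin β → Bool) : Fin β → ℤ :=
  fun i => if blockLt (y i) (x i) then -1 else 1

/-- The modified CFLS coloring `φ = φ₁ × φ₂` as a coloring of (unordered) edges:
it is evaluated on the orientation from the smaller endpoint to the larger one. -/
def phiEdge {β : ℕ} (x y : Fin β → Fin β → Bool) :
    (Option (Fin β × Finset (Fin β → Bool)) × (Fin β → Option (Fin β))) × (Fin β → ℤ) :=
  if strLt x y then (phi1 x y, phi2 x y) else (phi1 y x, phi2 y x)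

section Aux
variable {β : ℕ}

lemma blockLt_ne {u v : Fin β → Bool} (h : blockLt u v) : u ≠ v := by
  obtain ⟨j, h0, h1, -⟩ := h
  intro he
  rw [he, h1] at h0
  exact Bool.noConfusion h0

lemma blockLt_asymm {u v : Fin β → Bool} (h : blockLt u v) (h' : blockLt v u) : False := by
  obtain ⟨j, hj0, hj1, hjlt⟩ := h
  obtain ⟨j', hj'0, hj'1, hj'lt⟩ := h'
  rcases lt_trichotomy j j' with hlt | rfl | hlt
  · have h := hj'lt j hlt; rw [hj0, hj1] at h; exact Bool.noConfusion h
  · rw [hj0] at hj'1; exact Bool.noConfusion hj'1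
  · have h := hjlt j' hlt; rw [hj'1, hj'0] at h; exact Bool.noConfusion h

lemma blockLt_trans {u v w : Fin β → Bool} (h : blockLt u v) (h' : blockLt v w) :
    blockLt u w := by
  obtain ⟨j, hj0, hj1, hjlt⟩ := h
  obtain ⟨j', hj'0, hj'1, hj'lt⟩ := h'
  rcases lt_trichotomy j j' with hlt | rfl | hlt
  · exact ⟨j, hj0, by rw [← hj'lt j hlt]; exact hj1,
      fun k hk => (hjlt k hk).trans (hj'lt k (hk.trans hlt))⟩
  · exact ⟨j, hj0, hj'1, fun k hk => (hjlt k hk).trans (hj'lt k hk)⟩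
  · exact ⟨j', by rw [hjlt j' hlt]; exact hj'0, hj'1,
      fun k hk => (hjlt k (hk.trans hlt)).trans (hj'lt k hk)⟩

lemma blockLt_total {u v : Fin β → Bool} (h : u ≠ v) : blockLt u v ∨ blockLt v u := by
  obtain ⟨k0, hk0⟩ := Function.ne_iff.mp h
  have hNE : (Finset.univ.filter fun k => u k ≠ v k).Nonempty := ⟨k0, by simp [hk0]⟩
  set j := (Finset.univ.filter fun k => u k ≠ v k).min' hNE with hj
  have hjmem := (Finset.univ.filter fun k => u k ≠ v k).min'_mem hNE
  rw [← hj] at hjmem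
  have hjne : u j ≠ v j := by simpa using hjmem
  have hlow : ∀ k, k < j → u k = v k := by
    intro k hk
    by_contra hne
    exact absurd hk (not_lt.mpr (Finset.min'_le _ k (by simp [hne])))
  cases hu : u j <;> cases hv : v j
  · exact absurd (hu.trans hv.symm) hjne
  · exact Or.inl ⟨j, hu, hv, hlow⟩
  · exact Or.inr ⟨j, hv, hu, fun k hk => (hlow k hk).symm⟩
  · exact absurd (hu.trans hv.symm) hjne

lemma firstDiff_eq_some {α : Type*} [DecidableEq α] {u v : Fin β → α} {j : Fin β}
    (hne : u j ≠ v j) (hlow : ∀ k, k < j → u k = v k) : firstDiff u v = some j := by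
  have hmem : j ∈ Finset.univ.filter (fun k => u k ≠ v k) := by simp [hne]
  have hNE : (Finset.univ.filter fun k => u k ≠ v k).Nonempty := ⟨j, hmem⟩
  rw [firstDiff, dif_pos hNE]
  congr 1
  refine le_antisymm (Finset.min'_le _ _ hmem) (Finset.le_min' _ _ _ fun k hk => ?_)
  by_contra hlt
  push_neg at hlt
  exact (Finset.mem_filter.mp hk).2 (hlow k hlt)

lemma strLt_exists {x y : Fin β → Fin β → Bool} (h : strLt x y) :
    ∃ i, firstDiff x y = some i ∧ blockLt (x i) (y i) ∧ ∀ k, k < i → x k = y k := by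
  obtain ⟨i, hb, hlow⟩ := h
  exact ⟨i, firstDiff_eq_some (blockLt_ne hb) hlow, hb, hlow⟩

lemma strLt_asymm {x y : Fin β → Fin β → Bool} (h : strLt x y) (h' : strLt y x) : False := by
  obtain ⟨i, hb, hlow⟩ := h
  obtain ⟨i', hb', hlow'⟩ := h'
  rcases lt_trichotomy i i' with hlt | rfl | hlt
  · exact blockLt_ne hb (hlow' i hlt).symm
  · exact blockLt_asymm hb hb'
  · exact blockLt_ne hb' (hlow i' hlt).symm

lemma strLt_trans {x y z : Fin β → Fin β → Bool} (h : strLt x y) (h' : strLt y z) :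
    strLt x z := by
  obtain ⟨i, hb, hlow⟩ := h
  obtain ⟨i', hb', hlow'⟩ := h'
  rcases lt_trichotomy i i' with hlt | rfl | hlt
  · refine ⟨i, ?_, fun k hk => (hlow k hk).trans (hlow' k (hk.trans hlt))⟩
    rw [hlow' i hlt] at hb; exact hb
  · exact ⟨i, blockLt_trans hb hb', fun k hk => (hlow k hk).trans (hlow' k hk)⟩
  · exact ⟨i', by rw [hlow i' hlt]; exact hb', fun k hk => (hlow k (hk.trans hlt)).trans (hlow' k hk)⟩

lemma strLt_total {x y : Fin β → Fin β → Bool} (h : x ≠ y) : strLt x y ∨ strLt y x := by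
  obtain ⟨k0, hk0⟩ := Function.ne_iff.mp h
  have hNE : (Finset.univ.filter fun k => x k ≠ y k).Nonempty := ⟨k0, by simp [hk0]⟩
  set i := (Finset.univ.filter fun k => x k ≠ y k).min' hNE with hi
  have himem := (Finset.univ.filter fun k => x k ≠ y k).min'_mem hNE
  rw [← hi] at himem
  have hine : x i ≠ y i := by simpa using himem
  have hlow : ∀ k, k < i → x k = y k := by
    intro k hk
    by_contra hne
    exact absurd hk (not_lt.mpr (Finset.min'_le _ k (by simp [hne])))
  rcases blockLt_total hine with hb | hb
  · exact Or.inl ⟨i, hb, hlow⟩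
  · exact Or.inr ⟨i, hb, fun k hk => (hlow k hk).symm⟩

end Aux

section Aux2
variable {β : ℕ}

lemma phiEdge_pos {x y : Fin β → Fin β → Bool} (h : strLt x y) :
    phiEdge x y = (phi1 x y, phi2 x y) := by
  unfold phiEdge; rw [if_pos h]

lemma phiEdge_comm (x y : Fin β → Fin β → Bool) : phiEdge x y = phiEdge y x := by
  by_cases hxy : strLt x y
  · have hn : ¬ strLt y x := fun h => strLt_asymm hxy h
    unfold phiEdge; rw [if_pos hxy, if_neg hn]
  · by_cases hyx : strLt y x
    · unfold phiEdge; rw [if_pos hyx, if_neg hxy]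
    · have : x = y := by
        by_contra hne
        rcases strLt_total hne with h | h
        exacts [hxy h, hyx h]
      subst this; rfl

lemma pair_eq {γ : Type*} [DecidableEq γ] {u v w z : γ} (h : ({u, v} : Finset γ) = {w, z})
    (huv : u ≠ v) : (u = w ∧ v = z) ∨ (u = z ∧ v = w) := by
  have hu : u = w ∨ u = z := by
    have : u ∈ ({w, z} : Finset γ) := by rw [← h]; simp
    simpa using this
  have hv : v = w ∨ v = z := by
    have : v ∈ ({w, z} : Finset γ) := by rw [← h]; simp
    simpa using this
  rcases hu with hu | hu <;> rcases hv with hv | hv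
  · exact absurd (hu.trans hv.symm) huv
  · exact Or.inl ⟨hu, hv⟩
  · exact Or.inr ⟨hu, hv⟩
  · exact absurd (hu.trans hv.symm) huv

lemma phi1_match {x y z w : Fin β → Fin β → Bool} {i : Fin β}
    (h : phi1 x y = phi1 z w) (hfd : firstDiff x y = some i) :
    firstDiff z w = some i ∧ ({x i, y i} : Finset (Fin β → Bool)) = {z i, w i} := by
  have h1 := congrArg Prod.fst h
  simp only [phi1] at h1
  rw [hfd] at h1
  cases hzw : firstDiff z w with
  | none => rw [hzw] at h1; simp at h1
  | some i' =>
    rw [hzw] at h1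
    simp only [Option.map_some, Option.some.injEq, Prod.mk.injEq] at h1
    obtain ⟨heq, hset⟩ := h1
    subst heq
    exact ⟨rfl, hset⟩

lemma strLt_data {x y : Fin β → Fin β → Bool} {i : Fin β} (hxy : strLt x y)
    (hfd : firstDiff x y = some i) :
    blockLt (x i) (y i) ∧ ∀ k, k < i → x k = y k := by
  obtain ⟨i', hfd', hb, hlow⟩ := strLt_exists hxy
  have : i' = i := Option.some.inj (hfd'.symm.trans hfd)
  subst this
  exact ⟨hb, hlow⟩

lemma core (a b c d : Fin β → Fin β → Bool)
    (hab : strLt a b) (hac : strLt a c) (had : strLt a d)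
    (hbc : strLt b c) (hbd : strLt b d) (hcd : strLt c d)
    (h1 : phiEdge a b = phiEdge c d) (h2 : phiEdge a c = phiEdge b d)
    (h3 : phiEdge a d = phiEdge b c) : False := by
  rw [phiEdge_pos hab, phiEdge_pos hcd, Prod.mk.injEq] at h1
  rw [phiEdge_pos hac, phiEdge_pos hbd, Prod.mk.injEq] at h2
  rw [phiEdge_pos had, phiEdge_pos hbc, Prod.mk.injEq] at h3
  obtain ⟨h11, -⟩ := h1
  obtain ⟨h21, -⟩ := h2
  obtain ⟨h31, h32⟩ := h3
  obtain ⟨i1, fab, bab, lab⟩ := strLt_exists hab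
  obtain ⟨i2, fac, bac, lac⟩ := strLt_exists hac
  obtain ⟨i3, fad, bad, lad⟩ := strLt_exists had
  obtain ⟨fcd, s1⟩ := phi1_match h11 fab
  obtain ⟨fbd, s2⟩ := phi1_match h21 fac
  obtain ⟨fbc, s3⟩ := phi1_match h31 fad
  obtain ⟨bcd, lcd⟩ := strLt_data hcd fcd
  obtain ⟨bbd, lbd⟩ := strLt_data hbd fbd
  obtain ⟨bbc, lbc⟩ := strLt_data hbc fbc
  rcases lt_trichotomy i1 i2 with h12 | h12 | h12
  · rcases lt_trichotomy i1 i3 with h13 | h13 | h13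
    · -- i1 < i2, i1 < i3 : a i1 = c i1 = b i1, contradiction with a i1 ≠ b i1
      exact blockLt_ne bab ((lac i1 h12).trans (lbc i1 h13).symm)
    · -- i1 = i3 < i2 : a<b, b<c (at i1), c i1 = a i1
      subst h13
      have hca : c i1 = a i1 := (lac i1 h12).symm
      have : blockLt (b i1) (a i1) := by rw [← hca]; exact bbc
      exact blockLt_asymm bab this
    · -- i3 < i1 < i2 : a i3 = b i3 = d i3 contradicts a i3 ≠ d i3
      exact blockLt_ne bad ((lab i3 h13).trans (lbd i3 (h13.trans h12)))
  · subst h12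
    rcases lt_trichotomy i1 i3 with h13 | h13 | h13
    · -- i1 = i2 < i3 : a<b, b=c, c<d, d=a at block i1
      have hbc' : b i1 = c i1 := lbc i1 h13
      have hda : d i1 = a i1 := (lad i1 h13).symm
      have h' : blockLt (a i1) (a i1) := by
        have t1 : blockLt (a i1) (c i1) := by rw [← hbc']; exact bab
        have t2 : blockLt (a i1) (d i1) := blockLt_trans t1 bcd
        rw [hda] at t2; exact t2
      exact blockLt_asymm h' h'
    · -- i1 = i2 = i3 : all four blocks at i1 pairwise distinct, but {a,b}={c,d}
      subst h13
      have ha : a i1 = c i1 ∨ a i1 = d i1 := by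
        have : a i1 ∈ ({c i1, d i1} : Finset (Fin β → Bool)) := by rw [← s1]; simp
        simpa using this
      rcases ha with ha | ha
      · exact blockLt_ne bac ha
      · exact blockLt_ne bad ha
    · -- i3 < i1 = i2 : a i3 = b i3 = d i3
      exact blockLt_ne bad ((lab i3 h13).trans (lbd i3 h13))
  · rcases lt_trichotomy i2 i3 with h23 | h23 | h23
    · -- i2 < i1, i2 < i3 : a i2 = b i2 = c i2 contradicts a i2 ≠ c i2
      exact blockLt_ne bac ((lab i2 h12).trans (lbc i2 h23))
    · -- i2 = i3 < i1 : the δ case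
      subst h23
      rcases pair_eq s1 (blockLt_ne bab) with ⟨hac1, hbd1⟩ | ⟨had1, hbc1⟩
      · -- a i1 = c i1, b i1 = d i1
        have H := congrFun h32 i1
        simp only [phi2] at H
        have hpos : blockLt (c i1) (b i1) := by rw [hbd1]; exact bcd
        have hneg : ¬ blockLt (d i1) (a i1) := by
          intro hcon
          rw [hac1] at hcon
          exact blockLt_asymm bcd hcon
        rw [if_pos hpos, if_neg hneg] at H
        exact absurd H (by decide)
      · -- a i1 = d i1, b i1 = c i1: then blockLt (d i1)(c i1), contradicting bcd
        have : blockLt (d i1) (c i1) := by rw [← had1, ← hbc1]; exact bab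
        exact blockLt_asymm bcd this
    · -- i3 < i2, i3 < i1 : a i3 = b i3 = d i3
      exact blockLt_ne bad ((lab i3 (h23.trans h12)).trans (lbd i3 h23))

end Aux2

/-- The modified CFLS coloring `φ = φ₁ × φ₂` forbids a striped `K₄`: four distinct
vertices with `φ(ab) = φ(cd)`, `φ(ac) = φ(bd)`, and `φ(ad) = φ(bc)`. -/
theorem stmt_16 {β : ℕ} (a b c d : Fin β → Fin β → Bool)
    (hdist : Function.Injective ![a, b, c, d])
    (h1 : phiEdge a b = phiEdge c d) (h2 : phiEdge a c = phiEdge b d)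
    (h3 : phiEdge a d = phiEdge b c) : False := by
  have hab : a ≠ b := by simpa using hdist.ne (show (0:Fin 4) ≠ 1 by decide)
  have hac : a ≠ c := by simpa using hdist.ne (show (0:Fin 4) ≠ 2 by decide)
  have had : a ≠ d := by simpa using hdist.ne (show (0:Fin 4) ≠ 3 by decide)
  have hbc : b ≠ c := by simpa using hdist.ne (show (1:Fin 4) ≠ 2 by decide)
  have hbd : b ≠ d := by simpa using hdist.ne (show (1:Fin 4) ≠ 3 by decide)
  have hcd : c ≠ d := by simpa using hdist.ne (show (2:Fin 4) ≠ 3 by decide)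
  rcases strLt_total hab with o1 | o1
  · rcases strLt_total hac with o2 | o2
    · rcases strLt_total had with o3 | o3
      · rcases strLt_total hbc with o4 | o4
        · rcases strLt_total hbd with o5 | o5
          · rcases strLt_total hcd with o6 | o6
            · exact core a b c d o1 o2 o3 o4 o5 o6 h1 h2 h3
            · exact core a b d c o1 o3 o2 o5 o4 o6 (h1.trans (phiEdge_comm c d)) h3 h2
          · rcases strLt_total hcd with o6 | o6
            · exact strLt_asymm (strLt_trans o4 o6) o5
            · exact core a d b c o3 o1 o2 o5 o6 o4 h3 (h1.trans (phiEdge_comm c d)) (h2.trans (phiEdge_comm b d))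
        · rcases strLt_total hbd with o5 | o5
          · rcases strLt_total hcd with o6 | o6
            · exact core a c b d o2 o1 o3 o4 o6 o5 h2 h1 (h3.trans (phiEdge_comm b c))
            · exact strLt_asymm (strLt_trans o5 o6) o4
          · rcases strLt_total hcd with o6 | o6
            · exact core a c d b o2 o3 o1 o6 o4 o5 (h2.trans (phiEdge_comm b d)) (h3.trans (phiEdge_comm b c)) h1
            · exact core a d c b o3 o2 o1 o6 o5 o4 (h3.trans (phiEdge_comm b c)) (h2.trans (phiEdge_comm b d)) (h1.trans (phiEdge_comm c d))
      · rcases strLt_total hbc with o4 | o4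
        · rcases strLt_total hbd with o5 | o5
          · rcases strLt_total hcd with o6 | o6
            · exact strLt_asymm (strLt_trans o1 o5) o3
            · exact strLt_asymm (strLt_trans o1 o5) o3
          · rcases strLt_total hcd with o6 | o6
            · exact strLt_asymm (strLt_trans o2 o6) o3
            · exact core d a b c o3 o5 o6 o1 o2 o4 ((phiEdge_comm d a).trans h3) ((phiEdge_comm d b).trans h2.symm) ((phiEdge_comm d c).trans h1.symm)
        · rcases strLt_total hbd with o5 | o5
          · rcases strLt_total hcd with o6 | o6
            · exact strLt_asymm (strLt_trans o1 o5) o3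
            · exact strLt_asymm (strLt_trans o1 o5) o3
          · rcases strLt_total hcd with o6 | o6
            · exact strLt_asymm (strLt_trans o2 o6) o3
            · exact core d a c b o3 o6 o5 o2 o1 o4 (((phiEdge_comm d a).trans h3).trans (phiEdge_comm b c)) ((phiEdge_comm d c).trans h1.symm) ((phiEdge_comm d b).trans h2.symm)
    · rcases strLt_total had with o3 | o3
      · rcases strLt_total hbc with o4 | o4
        · rcases strLt_total hbd with o5 | o5
          · rcases strLt_total hcd with o6 | o6
            · exact strLt_asymm (strLt_trans o1 o4) o2
            · exact strLt_asymm (strLt_trans o1 o4) o2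
          · rcases strLt_total hcd with o6 | o6
            · exact strLt_asymm (strLt_trans o1 o4) o2
            · exact strLt_asymm (strLt_trans o1 o4) o2
        · rcases strLt_total hbd with o5 | o5
          · rcases strLt_total hcd with o6 | o6
            · exact core c a b d o2 o4 o6 o1 o3 o5 ((phiEdge_comm c a).trans h2) ((phiEdge_comm c b).trans h3.symm) h1.symm
            · exact strLt_asymm (strLt_trans o3 o6) o2
          · rcases strLt_total hcd with o6 | o6
            · exact core c a d b o2 o6 o4 o3 o1 o5 (((phiEdge_comm c a).trans h2).trans (phiEdge_comm b d)) h1.symm ((phiEdge_comm c b).trans h3.symm)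
            · exact strLt_asymm (strLt_trans o3 o6) o2
      · rcases strLt_total hbc with o4 | o4
        · rcases strLt_total hbd with o5 | o5
          · rcases strLt_total hcd with o6 | o6
            · exact strLt_asymm (strLt_trans o1 o4) o2
            · exact strLt_asymm (strLt_trans o1 o4) o2
          · rcases strLt_total hcd with o6 | o6
            · exact strLt_asymm (strLt_trans o1 o4) o2
            · exact strLt_asymm (strLt_trans o1 o4) o2
        · rcases strLt_total hbd with o5 | o5
          · rcases strLt_total hcd with o6 | o6
            · exact strLt_asymm (strLt_trans o1 o5) o3
            · exact strLt_asymm (strLt_trans o1 o5) o3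
          · rcases strLt_total hcd with o6 | o6
            · exact core c d a b o6 o2 o4 o3 o5 o1 h1.symm (((phiEdge_comm c a).trans h2).trans (phiEdge_comm b d)) (((phiEdge_comm c b).trans h3.symm).trans (phiEdge_comm a d))
            · exact core d c a b o6 o3 o5 o2 o4 o1 ((phiEdge_comm d c).trans h1.symm) (((phiEdge_comm d a).trans h3).trans (phiEdge_comm b c)) (((phiEdge_comm d b).trans h2.symm).trans (phiEdge_comm a c))
  · rcases strLt_total hac with o2 | o2
    · rcases strLt_total had with o3 | o3
      · rcases strLt_total hbc with o4 | o4
        · rcases strLt_total hbd with o5 | o5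
          · rcases strLt_total hcd with o6 | o6
            · exact core b a c d o1 o4 o5 o2 o3 o6 ((phiEdge_comm b a).trans h1) h3.symm h2.symm
            · exact core b a d c o1 o5 o4 o3 o2 o6 (((phiEdge_comm b a).trans h1).trans (phiEdge_comm c d)) h2.symm h3.symm
          · rcases strLt_total hcd with o6 | o6
            · exact strLt_asymm (strLt_trans o3 o5) o1
            · exact strLt_asymm (strLt_trans o3 o5) o1
        · rcases strLt_total hbd with o5 | o5
          · rcases strLt_total hcd with o6 | o6
            · exact strLt_asymm (strLt_trans o2 o4) o1
            · exact strLt_asymm (strLt_trans o2 o4) o1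
          · rcases strLt_total hcd with o6 | o6
            · exact strLt_asymm (strLt_trans o2 o4) o1
            · exact strLt_asymm (strLt_trans o2 o4) o1
      · rcases strLt_total hbc with o4 | o4
        · rcases strLt_total hbd with o5 | o5
          · rcases strLt_total hcd with o6 | o6
            · exact strLt_asymm (strLt_trans o2 o6) o3
            · exact core b d a c o5 o1 o4 o3 o6 o2 h2.symm (((phiEdge_comm b a).trans h1).trans (phiEdge_comm c d)) (h3.symm.trans (phiEdge_comm a d))
          · rcases strLt_total hcd with o6 | o6
            · exact strLt_asymm (strLt_trans o2 o6) o3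
            · exact core d b a c o5 o3 o6 o1 o4 o2 ((phiEdge_comm d b).trans h2.symm) ((phiEdge_comm d a).trans h3) (((phiEdge_comm d c).trans h1.symm).trans (phiEdge_comm a b))
        · rcases strLt_total hbd with o5 | o5
          · rcases strLt_total hcd with o6 | o6
            · exact strLt_asymm (strLt_trans o2 o4) o1
            · exact strLt_asymm (strLt_trans o2 o4) o1
          · rcases strLt_total hcd with o6 | o6
            · exact strLt_asymm (strLt_trans o2 o4) o1
            · exact strLt_asymm (strLt_trans o2 o4) o1
    · rcases strLt_total had with o3 | o3
      · rcases strLt_total hbc with o4 | o4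
        · rcases strLt_total hbd with o5 | o5
          · rcases strLt_total hcd with o6 | o6
            · exact core b c a d o4 o1 o5 o2 o6 o3 h3.symm ((phiEdge_comm b a).trans h1) (h2.symm.trans (phiEdge_comm a c))
            · exact strLt_asymm (strLt_trans o3 o6) o2
          · rcases strLt_total hcd with o6 | o6
            · exact strLt_asymm (strLt_trans o3 o5) o1
            · exact strLt_asymm (strLt_trans o3 o5) o1
        · rcases strLt_total hbd with o5 | o5
          · rcases strLt_total hcd with o6 | o6
            · exact core c b a d o4 o2 o6 o1 o5 o3 ((phiEdge_comm c b).trans h3.symm) ((phiEdge_comm c a).trans h2) (h1.symm.trans (phiEdge_comm a b))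
            · exact strLt_asymm (strLt_trans o3 o6) o2
          · rcases strLt_total hcd with o6 | o6
            · exact strLt_asymm (strLt_trans o3 o5) o1
            · exact strLt_asymm (strLt_trans o3 o5) o1
      · rcases strLt_total hbc with o4 | o4
        · rcases strLt_total hbd with o5 | o5
          · rcases strLt_total hcd with o6 | o6
            · exact core b c d a o4 o5 o1 o6 o2 o3 (h3.symm.trans (phiEdge_comm a d)) (h2.symm.trans (phiEdge_comm a c)) ((phiEdge_comm b a).trans h1)
            · exact core b d c a o5 o4 o1 o6 o3 o2 (h2.symm.trans (phiEdge_comm a c)) (h3.symm.trans (phiEdge_comm a d)) (((phiEdge_comm b a).trans h1).trans (phiEdge_comm c d))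
          · rcases strLt_total hcd with o6 | o6
            · exact strLt_asymm (strLt_trans o4 o6) o5
            · exact core d b c a o5 o6 o3 o4 o1 o2 (((phiEdge_comm d b).trans h2.symm).trans (phiEdge_comm a c)) (((phiEdge_comm d c).trans h1.symm).trans (phiEdge_comm a b)) ((phiEdge_comm d a).trans h3)
        · rcases strLt_total hbd with o5 | o5
          · rcases strLt_total hcd with o6 | o6
            · exact core c b d a o4 o6 o2 o5 o1 o3 (((phiEdge_comm c b).trans h3.symm).trans (phiEdge_comm a d)) (h1.symm.trans (phiEdge_comm a b)) ((phiEdge_comm c a).trans h2)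
            · exact strLt_asymm (strLt_trans o5 o6) o4
          · rcases strLt_total hcd with o6 | o6
            · exact core c d b a o6 o4 o2 o5 o3 o1 (h1.symm.trans (phiEdge_comm a b)) (((phiEdge_comm c b).trans h3.symm).trans (phiEdge_comm a d)) (((phiEdge_comm c a).trans h2).trans (phiEdge_comm b d))
            · exact core d c b a o6 o5 o3 o4 o2 o1 (((phiEdge_comm d c).trans h1.symm).trans (phiEdge_comm a b)) (((phiEdge_comm d b).trans h2.symm).trans (phiEdge_comm a c)) (((phiEdge_comm d a).trans h3).trans (phiEdge_comm b c))
end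

section
/- In the CFLS coloring φ₁, there do not exist five distinct vertices a, b, c, d, e with φ₁(ab) = φ₁(cd), φ₁(ae) = φ₁(bc), and φ₁(ac) = φ₁(de). -/
lemma firstDiff_comm {β : ℕ} {α : Type*} [DecidableEq α] (u v : Fin β → α) :
    firstDiff u v = firstDiff v u := by
  have h : (Finset.univ.filter fun k => u k ≠ v k) =
      (Finset.univ.filter fun k => v k ≠ u k) := by
    ext k; simp [ne_comm]
  rw [firstDiff, firstDiff, h]

lemma firstDiff_eq_none {β : ℕ} {α : Type*} [DecidableEq α] {u v : Fin β → α}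
    (h : firstDiff u v = none) : u = v := by
  rw [firstDiff] at h
  split at h
  · exact absurd h (by simp)
  · rename_i hne
    funext k
    by_contra hk
    exact hne ⟨k, by simp [hk]⟩

lemma firstDiff_self {β : ℕ} {α : Type*} [DecidableEq α] (u : Fin β → α) :
    firstDiff u u = none := by
  rw [firstDiff, dif_neg]
  simp

lemma firstDiff_spec {β : ℕ} {α : Type*} [DecidableEq α] {u v : Fin β → α} {j : Fin β}
    (h : firstDiff u v = some j) : u j ≠ v j := by
  rw [firstDiff] at h
  split at h
  · rename_i hne
    have hm := Finset.min'_mem (Finset.univ.filter fun k => u k ≠ v k) hne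
    rw [Option.some_inj] at h
    rw [h] at hm
    simpa using hm
  · exact absurd h (by simp)

lemma pair_cases {α : Type*} [DecidableEq α] {p q x y : α} (hxy : x ≠ y)
    (h : ({p, q} : Finset α) = {x, y}) : (p = x ∧ q = y) ∨ (p = y ∧ q = x) := by
  have hp : p ∈ ({x, y} : Finset α) := h ▸ Finset.mem_insert_self p {q}
  have hq : q ∈ ({x, y} : Finset α) := h ▸ (by simp)
  have hx : x ∈ ({p, q} : Finset α) := by rw [h]; simp
  have hy : y ∈ ({p, q} : Finset α) := by rw [h]; simp
  simp only [Finset.mem_insert, Finset.mem_singleton] at hp hq hx hy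
  tauto

/-- The CFLS coloring forbids five distinct vertices `a,b,c,d,e` with
`φ₁(ab) = φ₁(cd)`, `φ₁(ae) = φ₁(bc)`, and `φ₁(ac) = φ₁(de)`. -/
theorem stmt_17 {β : ℕ} (a b c d e : Fin β → Fin β → Bool)
    (hdist : Function.Injective ![a, b, c, d, e])
    (h1 : phi1 a b = phi1 c d) (h2 : phi1 a e = phi1 b c)
    (h3 : phi1 a c = phi1 d e) : False := by
  -- a ≠ c
  have hac : a ≠ c := by
    intro h
    have : (0 : Fin 5) = 2 := hdist (by simpa using h)
    simp at this
  -- firstDiff a c = some i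
  have hne : (Finset.univ.filter fun k => a k ≠ c k).Nonempty := by
    by_contra h
    apply hac
    funext k
    by_contra hk
    exact h ⟨k, by simp [hk]⟩
  set i := (Finset.univ.filter fun k => a k ≠ c k).min' hne with hi
  have hfd : firstDiff a c = some i := by rw [firstDiff, dif_pos hne]
  have hxy : a i ≠ c i := firstDiff_spec hfd
  -- components of the hypotheses
  have h31 := congrArg Prod.fst h3
  have h12 := congrArg (fun p => p.2 i) h1
  have h22 := congrArg (fun p => p.2 i) h2
  simp only [phi1] at h31 h12 h22
  rw [hfd] at h31
  -- firstDiff d e = some i and {d i, e i} = {a i, c i}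
  cases hde : firstDiff d e with
  | none => rw [hde] at h31; simp at h31
  | some i' =>
    rw [hde] at h31
    simp only [Option.map_some, Option.some_inj, Prod.mk.injEq] at h31
    obtain ⟨hi', hset⟩ := h31
    subst hi'
    rcases pair_cases hxy hset.symm with ⟨hd, he⟩ | ⟨hd, he⟩
    · -- d i = a i, e i = c i
      rw [hd] at h12
      rw [he] at h22
      -- firstDiff (a i) (c i) = some j
      cases hj : firstDiff (a i) (c i) with
      | none => exact hxy (firstDiff_eq_none hj)
      | some j =>
        have hbc : (b i) j ≠ (c i) j := firstDiff_spec (h22 ▸ hj ▸ rfl : firstDiff (b i) (c i) = some j)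
        have hab : (a i) j ≠ (b i) j := by
          apply firstDiff_spec (v := b i)
          rw [h12, firstDiff_comm, hj]
        have hac' : (a i) j ≠ (c i) j := firstDiff_spec hj
        revert hbc hab hac'
        cases (a i) j <;> cases (b i) j <;> cases (c i) j <;> simp
    · -- d i = c i, e i = a i
      rw [hd] at h12
      rw [he] at h22
      rw [firstDiff_self] at h12 h22
      have hab : a i = b i := firstDiff_eq_none h12
      have hbc : b i = c i := firstDiff_eq_none h22.symm
      exact hxy (hab.trans hbc)
end

section
/- In the CFLS coloring φ₁, suppose five distinct vertices a, b, c, d, e satisfy φ₁(ab) = φ₁(cd) = α, φ₁(bc) = φ₁(ad) = β, and φ₁(ae) = φ₁(de) = γ (an alternating C₄ abcd plus a cherry at e on vertices a, d). Then γ ∉ {α, β, φ₁(ac), φ₁(bd)}. -/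
lemma firstDiff_ne {β : ℕ} {α : Type*} [DecidableEq α] {u v : Fin β → α} {t : Fin β}
    (h : firstDiff u v = some t) : u t ≠ v t := by
  unfold firstDiff at h
  split at h
  · next hne =>
    have hm := Finset.min'_mem _ hne
    simp only [Option.some.injEq] at h
    rw [h] at hm
    simpa using hm
  · simp at h

lemma firstDiff_exists {β : ℕ} {α : Type*} [DecidableEq α] {u v : Fin β → α}
    (h : u ≠ v) : ∃ t, firstDiff u v = some t := by
  cases hf : firstDiff u v with
  | none => exact absurd (firstDiff_eq_none hf) h
  | some t => exact ⟨t, rfl⟩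

lemma phi1_snd_eq {β : ℕ} {x y x' y' : Fin β → Fin β → Bool}
    (h : phi1 x y = phi1 x' y') (k : Fin β) :
    firstDiff (x k) (y k) = firstDiff (x' k) (y' k) :=
  congrFun (congrArg Prod.snd h) k

lemma phi1_fst_eq {β : ℕ} {x y x' y' : Fin β → Fin β → Bool} {j : Fin β}
    (h : phi1 x y = phi1 x' y') (hj : firstDiff x y = some j) :
    firstDiff x' y' = some j ∧
      ({x j, y j} : Finset (Fin β → Bool)) = {x' j, y' j} := by
  have h1 := congrArg Prod.fst h
  simp only [phi1, hj, Option.map_some] at h1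
  cases hf : firstDiff x' y' with
  | none => rw [hf] at h1; simp at h1
  | some j' =>
    rw [hf] at h1
    simp only [Option.map_some, Option.some.injEq, Prod.mk.injEq] at h1
    obtain ⟨hjj, hp⟩ := h1
    exact ⟨by rw [hjj], by rw [hp, hjj]⟩

lemma bool_eq_of_ne {x y z : Bool} (h1 : x ≠ z) (h2 : y ≠ z) : x = y := by
  cases x <;> cases y <;> cases z <;> simp_all

/-- If five distinct vertices satisfy `φ₁(ab) = φ₁(cd) = α`, `φ₁(bc) = φ₁(ad) = β'`,
and `φ₁(ae) = φ₁(de) = γ` (an alternating `C₄` plus a cherry at `e`), then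
`γ ∉ {α, β', φ₁(ac), φ₁(bd)}`. -/
theorem stmt_19 {β : ℕ} (a b c d e : Fin β → Fin β → Bool)
    (hdist : Function.Injective ![a, b, c, d, e])
    (h1 : phi1 a b = phi1 c d) (h2 : phi1 b c = phi1 a d)
    (h3 : phi1 a e = phi1 d e) :
    phi1 a e ≠ phi1 a b ∧ phi1 a e ≠ phi1 b c ∧
    phi1 a e ≠ phi1 a c ∧ phi1 a e ≠ phi1 b d := by
  -- a ≠ d
  have had : a ≠ d := by
    intro h
    have := hdist (a₁ := 0) (a₂ := 3) (by simp [h])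
    exact absurd this (by decide)
  obtain ⟨i, hi⟩ := firstDiff_exists had
  have hadi : a i ≠ d i := firstDiff_ne hi
  -- From h2 : firstDiff b c = some i and {a i, d i} = {b i, c i}
  obtain ⟨hbci, hpair⟩ := phi1_fst_eq h2.symm hi
  have hbmem : b i = a i ∨ b i = d i := by
    have : b i ∈ ({a i, d i} : Finset (Fin β → Bool)) := by
      rw [hpair]; simp
    simpa using this
  have hcmem : c i = a i ∨ c i = d i := by
    have : c i ∈ ({a i, d i} : Finset (Fin β → Bool)) := by
      rw [hpair]; simp
    simpa using this
  -- second components of the cherry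
  have hDE : ∀ k, firstDiff (a k) (e k) = firstDiff (d k) (e k) := phi1_snd_eq h3
  -- Shared step: if firstDiff (a i) (e i) = some t then a i t = d i t;
  -- it can't be none since a i ≠ d i.
  have key : ∀ X : Fin β → Bool, (X = a i ∨ X = d i) →
      firstDiff (a i) (e i) = firstDiff (a i) X → False := by
    intro X hX hfe
    cases hs : firstDiff (a i) (e i) with
    | none =>
      have h₁ := firstDiff_eq_none hs
      have h₂ := firstDiff_eq_none ((hDE i).symm.trans hs)
      exact hadi (h₁.trans h₂.symm)
    | some t =>
      have hae : a i t ≠ e i t := firstDiff_ne hs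
      have hde : d i t ≠ e i t := firstDiff_ne ((hDE i).symm.trans hs)
      have hadt : a i t = d i t := bool_eq_of_ne hae hde
      have hax : a i t ≠ X t := firstDiff_ne (hfe ▸ hs : firstDiff (a i) X = some t)
      rcases hX with h | h
      · exact hax (by rw [h])
      · exact hax (by rw [h, hadt])
  have key' : ∀ X : Fin β → Bool, (X = a i ∨ X = d i) →
      firstDiff (a i) (e i) = firstDiff X (d i) → False := by
    intro X hX hfe
    cases hs : firstDiff (a i) (e i) with
    | none =>
      have h₁ := firstDiff_eq_none hs
      have h₂ := firstDiff_eq_none ((hDE i).symm.trans hs)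
      exact hadi (h₁.trans h₂.symm)
    | some t =>
      have hae : a i t ≠ e i t := firstDiff_ne hs
      have hde : d i t ≠ e i t := firstDiff_ne ((hDE i).symm.trans hs)
      have hadt : a i t = d i t := bool_eq_of_ne hae hde
      have hxd : X t ≠ d i t := firstDiff_ne (hfe ▸ hs : firstDiff X (d i) = some t)
      rcases hX with h | h
      · exact hxd (by rw [h, hadt])
      · exact hxd (by rw [h])
  refine ⟨?_, ?_, ?_, ?_⟩
  · -- γ ≠ α
    intro hγ
    exact key (b i) hbmem (phi1_snd_eq hγ i)
  · -- γ ≠ β'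
    intro hγ
    have hγ2 : phi1 a e = phi1 a d := hγ.trans h2
    obtain ⟨haei, hpair2⟩ := phi1_fst_eq hγ2.symm hi
    obtain ⟨hdei, _⟩ := phi1_fst_eq h3 haei
    have haie : a i ≠ e i := firstDiff_ne haei
    have hdie : d i ≠ e i := firstDiff_ne hdei
    have : e i ∈ ({a i, d i} : Finset (Fin β → Bool)) := by
      rw [hpair2]; simp
    simp only [Finset.mem_insert, Finset.mem_singleton] at this
    rcases this with h | h
    · exact haie h.symm
    · exact hdie h.symm
  · -- γ ≠ φ₁(ac)
    intro hγ
    exact key (c i) hcmem (phi1_snd_eq hγ i)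
  · -- γ ≠ φ₁(bd)
    intro hγ
    exact key' (b i) hbmem (phi1_snd_eq hγ i)
end
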